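/- Fix $x \ge 0$ and a non-increasing rate function $r:\mathbb{N}^*\to(0,1]$. The processor-sharing one-step map $\Phi^r(\cdot, x): \mu \mapsto \tau_{\gamma^r(\mu,x)}\mu$ is non-decreasing on finite counting measures for the partial integral order: $\mu \preceq \nu$ implies $\Phi^r(\mu,x) \preceq \Phi^r(\nu,x)$. -/

import Mathlib

/-!
Testing the integral order against constants and against indicators of half-lines `(t, ∞)`
shows that `n` has at least as many atoms as `m` and that the `i`-th largest atom of `m` is at
most the `i`-th largest atom of `n`.

The level `γ^r(m, x)` solves `T_m(g) = x`, where `T_m(g)` is the time processor sharing needs to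
bring every customer of `m` to service `g` (or to its whole requirement, if smaller). `T_m` is
strictly increasing in `g` and, for `g ≥ 0`, increasing in the profile for the atomwise order,
so `γ^r(n, x) ≤ γ^r(m, x)`. Finally, for a monotone test function `f ≥ 0`, the pullback
`a ↦ f (a - c)` on `(c, ∞)`, extended by `0`, is monotone in `a` and decreasing in `c`.
-/

open MeasureTheory Filter Topology

/-- The partial integral order `≼` on finite positive measures. -/
def IntOrder (μ ν : Measure ℝ) : Prop :=
  ∀ f : ℝ → ℝ, Measurable f → Monotone f → (∀ x, 0 ≤ f x) → (∃ C, ∀ x, f x ≤ C) →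
    ∫ x, f x ∂μ ≤ ∫ x, f x ∂ν

/-- The `i`-th smallest atom (1-based) of the finite counting measure represented by the
multiset `m`. -/
noncomputable def atom (m : Multiset ℝ) (i : ℕ) : ℝ :=
  (m.sort (· ≤ ·)).getD (i - 1) 0

/-- `γ_i^r(m, x)`. -/
noncomputable def gam (r : ℕ → ℝ) (m : Multiset ℝ) (x : ℝ) (i : ℕ) : ℝ :=
  r (Multiset.card m - i + 1) *
    (x - ∑ j ∈ Finset.Icc 1 (i - 1),
      atom m j * (1 / r (Multiset.card m - j + 1) - 1 / r (Multiset.card m - j)))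

open Classical in
/-- `i^r(m, x) = max {i ≤ N(m) : α_i(m) ≤ γ_i^r(m,x)}`, with `max ∅ = 0`. -/
noncomputable def irdx (r : ℕ → ℝ) (m : Multiset ℝ) (x : ℝ) : ℕ :=
  WithBot.unbotD 0 (((Finset.Icc 1 (Multiset.card m)).filter (fun i => atom m i ≤ gam r m x i)).max)

/-- `γ^r(m, x)`, the amount of attained service per customer by time `x`
(`0` for the empty profile). -/
noncomputable def gammaStar (r : ℕ → ℝ) (m : Multiset ℝ) (x : ℝ) : ℝ :=
  if m = 0 then 0 else gam r m x (min (irdx r m x + 1) (Multiset.card m))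

open Classical in
/-- The one-step processor-sharing map `Φ^r(·, x) = τ_{γ^r(·,x)}`. -/
noncomputable def PhiM (r : ℕ → ℝ) (m : Multiset ℝ) (x : ℝ) : Multiset ℝ :=
  (m.filter (fun a => gammaStar r m x < a)).map (fun a => a - gammaStar r m x)

/-- The counting measure associated to a multiset of atoms. -/
noncomputable def toMeas (m : Multiset ℝ) : Measure ℝ :=
  (m.map (fun a => (Measure.dirac a : Measure ℝ))).sum

open Finset

lemma toMeas_cons (a : ℝ) (m : Multiset ℝ) :
    toMeas (a ::ₘ m) = Measure.dirac a + toMeas m := by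
  simp [toMeas]

lemma integrable_toMeas (f : ℝ → ℝ) (m : Multiset ℝ) : Integrable f (toMeas m) := by
  induction m using Multiset.induction_on with
  | empty => simp [toMeas]
  | cons a m ih => rw [toMeas_cons]; exact (integrable_dirac enorm_lt_top).add_measure ih

lemma integral_toMeas (f : ℝ → ℝ) (m : Multiset ℝ) :
    ∫ y, f y ∂toMeas m = (m.map f).sum := by
  induction m using Multiset.induction_on with
  | empty => simp [toMeas]
  | cons a m ih =>
    rw [toMeas_cons,
      integral_add_measure (integrable_dirac enorm_lt_top) (integrable_toMeas f m),
      integral_dirac, ih, Multiset.map_cons, Multiset.sum_cons]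

lemma intOrder_toMeas_iff {m n : Multiset ℝ} :
    IntOrder (toMeas m) (toMeas n) ↔ ∀ f : ℝ → ℝ, Measurable f → Monotone f →
      (∀ x, 0 ≤ f x) → (∃ C, ∀ x, f x ≤ C) → (m.map f).sum ≤ (n.map f).sum := by
  simp only [IntOrder, integral_toMeas]

lemma intOrder_zero_left (ν : Measure ℝ) : IntOrder 0 ν :=
  fun _ _ _ hf0 _ => by simpa using integral_nonneg hf0

lemma Multiset.sum_map_filter {α M : Type*} [AddCommMonoid M] (p : α → Prop) [DecidablePred p]
    (f : α → M) (s : Multiset α) :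
    ((s.filter p).map f).sum = (s.map fun a => if p a then f a else 0).sum := by
  induction s using Multiset.induction_on with
  | empty => simp
  | cons a s ih => by_cases hpa : p a <;> simp [hpa, ih]

lemma card_le_card_of_intOrder {m n : Multiset ℝ} (h : IntOrder (toMeas m) (toMeas n)) :
    Multiset.card m ≤ Multiset.card n := by
  have := intOrder_toMeas_iff.1 h (fun _ => 1) measurable_const monotone_const
    (fun _ => zero_le_one) ⟨1, fun _ => le_rfl⟩
  simpa using this

lemma countP_lt_le_of_intOrder {m n : Multiset ℝ} (h : IntOrder (toMeas m) (toMeas n)) (t : ℝ) :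
    m.countP (t < ·) ≤ n.countP (t < ·) := by
  have hmono : Monotone fun a : ℝ => if t < a then (1 : ℝ) else 0 := fun a b hab => by
    by_cases ha : t < a
    · simp [ha, ha.trans_le hab]
    · by_cases hb : t < b <;> simp [ha, hb]
  have := intOrder_toMeas_iff.1 h _ (measurable_const.ite measurableSet_Ioi measurable_const)
    hmono (fun _ => by positivity) ⟨1, fun _ => by split_ifs <;> norm_num⟩
  simpa [← Multiset.sum_map_filter, Multiset.countP_eq_card_filter] using this

lemma List.Pairwise.lt_getElem_iff {α : Type*} [LinearOrder α] {l : List α}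
    (hl : l.Pairwise (· ≤ ·)) {i : ℕ} (hi : i < l.length) (t : α) :
    t < l[i] ↔ l.length - i ≤ l.countP (t < ·) := by
  have hle := hl.sortedLE.getElem_le_getElem_of_le
  constructor
  · intro ht
    calc l.length - i = (l.drop i).countP (t < ·) := by
          rw [List.length_drop.symm, eq_comm, List.countP_eq_length]
          intro b hb
          obtain ⟨j, hj, rfl⟩ := List.mem_iff_getElem.1 hb
          simpa using ht.trans_le (hle (by omega))
      _ ≤ l.countP (t < ·) := (List.drop_sublist i l).countP_le
  · intro hcount
    by_contra! ht
    have htake : (l.take (i + 1)).countP (t < ·) = 0 := by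
      rw [List.countP_eq_zero]
      intro b hb
      obtain ⟨j, hj, rfl⟩ := List.mem_iff_getElem.1 hb
      simpa using (hle (by rw [List.length_take] at hj; omega)).trans ht
    have hsplit :=
      List.countP_append (p := (t < ·)) (l₁ := l.take (i + 1)) (l₂ := l.drop (i + 1))
    rw [List.take_append_drop, htake, zero_add] at hsplit
    have := (l.drop (i + 1)).countP_le_length (p := (t < ·))
    rw [List.length_drop] at this
    omega

lemma atom_eq_getElem {m : Multiset ℝ} {i : ℕ} (hi : i < Multiset.card m) :
    atom m (i + 1) = (m.sort (· ≤ ·))[i]'(by simpa) := by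
  rw [atom, Nat.add_sub_cancel, List.getD_eq_getElem]

lemma atom_mem {m : Multiset ℝ} {i : ℕ} (h1 : 1 ≤ i) (h2 : i ≤ Multiset.card m) :
    atom m i ∈ m := by
  obtain ⟨i, rfl⟩ := Nat.exists_eq_add_of_le' h1
  rw [atom_eq_getElem (by omega), ← Multiset.mem_sort (· ≤ ·)]
  exact List.getElem_mem _

lemma atom_le_atom {m : Multiset ℝ} {i j : ℕ} (h1 : 1 ≤ i) (hij : i ≤ j)
    (hj : j ≤ Multiset.card m) :
    atom m i ≤ atom m j := by
  obtain ⟨i, rfl⟩ := Nat.exists_eq_add_of_le' h1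
  obtain ⟨j, rfl⟩ := Nat.exists_eq_add_of_le' (h1.trans hij)
  rw [atom_eq_getElem (by omega), atom_eq_getElem (by omega)]
  exact (Multiset.pairwise_sort m _).sortedLE.getElem_le_getElem_of_le (by omega)

/-- The paper's description of `≼` on counting measures, comparing atoms from the largest down. -/
def AtomsLE (m n : Multiset ℝ) : Prop :=
  Multiset.card m ≤ Multiset.card n ∧
    ∀ i < Multiset.card m, atom m (Multiset.card m - i) ≤ atom n (Multiset.card n - i)

lemma atomsLE_of_countP_le {m n : Multiset ℝ} (hcard : Multiset.card m ≤ Multiset.card n)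
    (hcount : ∀ t, m.countP (t < ·) ≤ n.countP (t < ·)) : AtomsLE m n := by
  refine ⟨hcard, fun i hi => ?_⟩
  -- Were the `(i + 1)`-th largest atom of `m` above the `(i + 1)`-th largest atom `t` of `n`,
  -- at least `i + 1` atoms of `m` but at most `i` atoms of `n` would exceed `t`.
  have hsort : ∀ s : Multiset ℝ, s.countP (atom n (Multiset.card n - i) < ·) =
      (s.sort (· ≤ ·)).countP (atom n (Multiset.card n - i) < ·) := fun s => by
    conv_lhs => rw [← Multiset.sort_eq s (· ≤ ·)]
    rw [Multiset.coe_countP]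
  have hm := (Multiset.pairwise_sort m (· ≤ ·)).lt_getElem_iff (i := Multiset.card m - i - 1)
    (by rw [Multiset.length_sort]; omega) (atom n (Multiset.card n - i))
  have hn := (Multiset.pairwise_sort n (· ≤ ·)).lt_getElem_iff (i := Multiset.card n - i - 1)
    (by rw [Multiset.length_sort]; omega) (atom n (Multiset.card n - i))
  rw [← atom_eq_getElem (by omega), Nat.sub_add_cancel (by omega)] at hm hn
  have := hcount (atom n (Multiset.card n - i))
  simp only [hsort, Multiset.length_sort, lt_irrefl, false_iff] at hm hn this
  by_contra! hlt
  have := hm.1 hlt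
  omega

lemma atomsLE_of_intOrder {m n : Multiset ℝ} (h : IntOrder (toMeas m) (toMeas n)) :
    AtomsLE m n :=
  atomsLE_of_countP_le (card_le_card_of_intOrder h) (countP_lt_le_of_intOrder h)

section ServiceTime

variable {r : ℕ → ℝ}

/-- The time needed for every customer of `m` to receive service `g`, or its full requirement if
smaller, when each of `k` customers present is served at rate `r k`: the `(i + 1)`-th largest
atom `atom m (card m - i)` stays while the service level runs through `[0, min g _]`, and summing
by parts gives this form. -/
noncomputable def serviceTime (r : ℕ → ℝ) (m : Multiset ℝ) (g : ℝ) : ℝ :=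
  g / r 1 + ∑ i ∈ Ico 1 (Multiset.card m),
    min g (atom m (Multiset.card m - i)) * (1 / r (i + 1) - 1 / r i)

lemma serviceTime_eq_of_bracket {m : Multiset ℝ} {g : ℝ} {k : ℕ} (hk : k < Multiset.card m)
    (hlow : ∀ j, 1 ≤ j → j ≤ k → atom m j ≤ g)
    (hup : ∀ j, k < j → j < Multiset.card m → g ≤ atom m j) :
    serviceTime r m g = ∑ j ∈ Icc 1 k,
      atom m j * (1 / r (Multiset.card m - j + 1) - 1 / r (Multiset.card m - j)) +
        g / r (Multiset.card m - k) := by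
  set N := Multiset.card m
  have hfinished : ∑ i ∈ Ico (N - k) N, min g (atom m (N - i)) * (1 / r (i + 1) - 1 / r i) =
      ∑ j ∈ Icc 1 k, atom m j * (1 / r (N - j + 1) - 1 / r (N - j)) := by
    have hreflect := sum_Ico_reflect
      (fun j => atom m j * (1 / r (N - j + 1) - 1 / r (N - j))) (N - k) (Nat.le_succ N)
    rw [show N + 1 - N = 1 by omega, show N + 1 - (N - k) = k + 1 by omega,
      Ico_add_one_right_eq_Icc] at hreflect
    rw [← hreflect]
    refine sum_congr rfl fun i hi => ?_
    rw [mem_Ico] at hi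
    rw [min_eq_right (hlow _ (by omega) (by omega)), Nat.sub_sub_self hi.2.le]
  have hunfinished : ∑ i ∈ Ico 1 (N - k), min g (atom m (N - i)) * (1 / r (i + 1) - 1 / r i) =
      g * (1 / r (N - k) - 1 / r 1) := by
    rw [← sum_Ico_sub (fun i => 1 / r i) (by omega : 1 ≤ N - k), mul_sum]
    refine sum_congr rfl fun i hi => ?_
    rw [mem_Ico] at hi
    rw [min_eq_left (hup _ (by omega) (by omega))]
  rw [serviceTime, ← sum_Ico_consecutive _ (by omega : 1 ≤ N - k) (by omega : N - k ≤ N),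
    hunfinished, hfinished]
  ring

variable (hr : ∀ n, 1 ≤ n → 0 < r n)

include hr in
lemma serviceTime_gam {m : Multiset ℝ} {x : ℝ} {k : ℕ} (hk : k < Multiset.card m)
    (hlow : 1 ≤ k → atom m k ≤ gam r m x (k + 1))
    (hup : k + 1 < Multiset.card m → gam r m x (k + 1) ≤ atom m (k + 1)) :
    serviceTime r m (gam r m x (k + 1)) = x := by
  rw [serviceTime_eq_of_bracket hk
    (fun j hj hjk => (atom_le_atom hj hjk hk.le).trans (hlow (hj.trans hjk)))
    (fun j hkj hjN => (hup (by omega)).trans (atom_le_atom (by omega) hkj hjN.le))]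
  have hrk := (hr (Multiset.card m - k) (by omega)).ne'
  rw [gam, show Multiset.card m - (k + 1) + 1 = Multiset.card m - k by omega,
    Nat.add_sub_cancel]
  field_simp
  ring

include hr in
lemma atom_le_gam_succ {m : Multiset ℝ} {x : ℝ} {k : ℕ} (hk : 1 ≤ k)
    (hkN : k < Multiset.card m)
    (h : atom m k ≤ gam r m x k) : atom m k ≤ gam r m x (k + 1) := by
  obtain ⟨k, rfl⟩ := Nat.exists_eq_add_of_le' hk
  have hρ := hr (Multiset.card m - (k + 1) + 1) (by omega)
  have hρ' := hr (Multiset.card m - (k + 1)) (by omega)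
  have key : gam r m x (k + 1 + 1) - atom m (k + 1) =
      r (Multiset.card m - (k + 1)) / r (Multiset.card m - (k + 1) + 1) *
        (gam r m x (k + 1) - atom m (k + 1)) := by
    rw [gam, gam, show Multiset.card m - (k + 1 + 1) + 1 = Multiset.card m - (k + 1) by omega,
      Nat.add_sub_cancel, Nat.add_sub_cancel, sum_Icc_succ_top (by omega)]
    field_simp
    ring
  have := mul_nonneg (div_pos hρ' hρ).le (sub_nonneg.2 h)
  linarith

variable (hrmono : ∀ p q, 1 ≤ p → p ≤ q → r q ≤ r p)

include hr hrmono in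
lemma one_div_rate_sub_nonneg {i : ℕ} (hi : 1 ≤ i) : 0 ≤ 1 / r (i + 1) - 1 / r i :=
  sub_nonneg.2 (one_div_le_one_div_of_le (hr _ (by omega)) (hrmono _ _ hi (by omega)))

include hr hrmono in
lemma serviceTime_strictMono (m : Multiset ℝ) : StrictMono (serviceTime r m) := fun _ _ hg =>
  add_lt_add_of_lt_of_le (div_lt_div_of_pos_right hg (hr 1 le_rfl)) <| sum_le_sum fun _ hi =>
    mul_le_mul_of_nonneg_right (min_le_min_right _ hg.le)
      (one_div_rate_sub_nonneg hr hrmono (mem_Ico.1 hi).1)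

lemma serviceTime_zero {m : Multiset ℝ} (hm : ∀ a ∈ m, 0 ≤ a) : serviceTime r m 0 = 0 := by
  rw [serviceTime, zero_div, zero_add]
  refine sum_eq_zero fun i hi => ?_
  rw [mem_Ico] at hi
  rw [min_eq_left (hm _ (atom_mem (by omega) (by omega))), zero_mul]

include hr hrmono in
lemma serviceTime_le_serviceTime {m n : Multiset ℝ} (hn : ∀ a ∈ n, 0 ≤ a) (h : AtomsLE m n)
    {g : ℝ} (hg : 0 ≤ g) : serviceTime r m g ≤ serviceTime r n g := by
  obtain ⟨hcard, hatom⟩ := h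
  refine add_le_add_right ((sum_le_sum fun i hi => ?_).trans
    (sum_le_sum_of_subset_of_nonneg (Ico_subset_Ico_right hcard) fun i hi _ => ?_)) (g / r 1)
  · rw [mem_Ico] at hi
    exact mul_le_mul_of_nonneg_right (min_le_min_left _ (hatom i (by omega)))
      (one_div_rate_sub_nonneg hr hrmono hi.1)
  · rw [mem_Ico] at hi
    exact mul_nonneg (le_min hg (hn _ (atom_mem (by omega) (by omega))))
      (one_div_rate_sub_nonneg hr hrmono hi.1)

end ServiceTime

lemma Finset.max_unbotD_mem {α : Type*} [LinearOrder α] {s : Finset α} {d : α}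
    (h : s.max.unbotD d ≠ d) : s.max.unbotD d ∈ s := by
  cases hs : s.max with
  | bot => simp [hs] at h
  | coe a => exact mem_of_max hs

lemma Finset.le_max_unbotD {α : Type*} [LinearOrder α] {s : Finset α} {a : α} (d : α)
    (ha : a ∈ s) : a ≤ s.max.unbotD d :=
  WithBot.coe_le_coe.1 ((le_max ha).trans (WithBot.le_coe_unbotD _ _))

section Irdx

variable {r : ℕ → ℝ} {m : Multiset ℝ} {x : ℝ}

lemma irdx_spec (h : irdx r m x ≠ 0) : 1 ≤ irdx r m x ∧ irdx r m x ≤ Multiset.card m ∧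
    atom m (irdx r m x) ≤ gam r m x (irdx r m x) := by
  simpa [irdx, and_assoc] using max_unbotD_mem h

lemma irdx_le_card : irdx r m x ≤ Multiset.card m := by
  by_cases h : irdx r m x = 0
  · omega
  · exact (irdx_spec h).2.1

lemma gam_lt_atom_irdx_succ (h : irdx r m x < Multiset.card m) :
    gam r m x (irdx r m x + 1) < atom m (irdx r m x + 1) := by
  by_contra! hle
  have hmem : irdx r m x + 1 ∈ (Icc 1 (Multiset.card m)).filter
      fun i => atom m i ≤ gam r m x i := by
    rw [mem_filter, mem_Icc]
    exact ⟨⟨by omega, by omega⟩, hle⟩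
  exact (le_max_unbotD 0 hmem).not_gt (Nat.lt_succ_self _)

end Irdx

section GammaStar

variable {r : ℕ → ℝ} (hr : ∀ n, 1 ≤ n → 0 < r n)

include hr in
lemma serviceTime_gammaStar {m : Multiset ℝ} (hm0 : m ≠ 0) (x : ℝ) :
    serviceTime r m (gammaStar r m x) = x := by
  have hN : 0 < Multiset.card m := Multiset.card_pos.2 hm0
  rw [gammaStar, if_neg hm0]
  rcases (irdx_le_card (r := r) (m := m) (x := x)).lt_or_eq with hlt | heq
  · rw [min_eq_left (by omega)]
    refine serviceTime_gam hr hlt (fun hk => ?_) fun _ => (gam_lt_atom_irdx_succ hlt).le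
    exact atom_le_gam_succ hr hk hlt (irdx_spec (by omega)).2.2
  · obtain ⟨k, hk⟩ := Nat.exists_eq_add_one.2 hN
    have hfull : atom m (k + 1) ≤ gam r m x (k + 1) := by
      simpa only [heq, hk] using (irdx_spec (r := r) (m := m) (x := x) (by omega)).2.2
    rw [heq, min_eq_right (by omega), hk]
    refine serviceTime_gam hr (by omega) (fun hk1 => ?_) fun h => absurd h (by omega)
    exact (atom_le_atom hk1 k.le_succ (by omega)).trans hfull

variable (hrmono : ∀ p q, 1 ≤ p → p ≤ q → r q ≤ r p)

include hr hrmono in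
lemma gammaStar_nonneg {m : Multiset ℝ} (hm0 : m ≠ 0) (hm : ∀ a ∈ m, 0 ≤ a) {x : ℝ}
    (hx : 0 ≤ x) : 0 ≤ gammaStar r m x :=
  (serviceTime_strictMono hr hrmono m).le_iff_le.1 <| by
    rw [serviceTime_zero hm, serviceTime_gammaStar hr hm0]
    exact hx

include hr hrmono in
lemma gammaStar_le_gammaStar {m n : Multiset ℝ} (hm0 : m ≠ 0) (hn : ∀ a ∈ n, 0 ≤ a)
    (h : AtomsLE m n) {x : ℝ} (hx : 0 ≤ x) : gammaStar r n x ≤ gammaStar r m x := by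
  have hn0 : n ≠ 0 := by
    rw [← Multiset.card_pos] at hm0 ⊢
    exact hm0.trans_le h.1
  by_contra! hlt
  refine lt_irrefl x ?_
  calc x = serviceTime r m (gammaStar r m x) := (serviceTime_gammaStar hr hm0 x).symm
    _ < serviceTime r m (gammaStar r n x) := serviceTime_strictMono hr hrmono m hlt
    _ ≤ serviceTime r n (gammaStar r n x) :=
      serviceTime_le_serviceTime hr hrmono hn h (gammaStar_nonneg hr hrmono hn0 hn hx)
    _ = x := serviceTime_gammaStar hr hn0 x

end GammaStar

/-- The shift `τ_c` of the paper. -/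
noncomputable def shift (c : ℝ) (m : Multiset ℝ) : Multiset ℝ :=
  (m.filter (c < ·)).map (· - c)

lemma intOrder_shift {m n : Multiset ℝ} {c c' : ℝ} (h : IntOrder (toMeas m) (toMeas n))
    (hc : c' ≤ c) : IntOrder (toMeas (shift c m)) (toMeas (shift c' n)) := by
  rw [intOrder_toMeas_iff] at h ⊢
  intro f hf hmono hf0 ⟨C, hC⟩
  let pullback (c a : ℝ) : ℝ := if c < a then f (a - c) else 0
  have hsum (c : ℝ) (s : Multiset ℝ) : ((shift c s).map f).sum = (s.map (pullback c)).sum := by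
    rw [shift, Multiset.map_map, Multiset.sum_map_filter]
    rfl
  have hanti (a : ℝ) : pullback c a ≤ pullback c' a := by
    by_cases ha : c < a
    · simpa [pullback, ha, hc.trans_lt ha] using hmono (by linarith)
    · by_cases ha' : c' < a <;> simp [pullback, ha, ha', hf0]
  have hpullback_mono : Monotone (pullback c') := fun a b hab => by
    by_cases ha : c' < a
    · simpa [pullback, ha, ha.trans_le hab] using hmono (by linarith)
    · by_cases hb : c' < b <;> simp [pullback, ha, hb, hf0]
  rw [hsum, hsum]
  calc (m.map (pullback c)).sum ≤ (m.map (pullback c')).sum :=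
        Multiset.sum_map_le_sum_map _ _ fun a _ => hanti a
    _ ≤ (n.map (pullback c')).sum :=
      h _ ((hf.comp (measurable_id.sub_const c')).ite measurableSet_Ioi measurable_const)
        hpullback_mono (fun a => by by_cases ha : c' < a <;> simp [pullback, ha, hf0])
        ⟨C, fun a => by by_cases ha : c' < a <;> simp [pullback, ha, hC, (hf0 0).trans (hC 0)]⟩

theorem stmt13_general (r : ℕ → ℝ) (hr : ∀ n, 1 ≤ n → 0 < r n ∧ r n ≤ 1)
    (hrmono : ∀ p q, 1 ≤ p → p ≤ q → r q ≤ r p)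
    (x : ℝ) (hx : 0 ≤ x)
    (m n : Multiset ℝ) (hn : ∀ a ∈ n, (0:ℝ) ≤ a)
    (h : IntOrder (toMeas m) (toMeas n)) :
    IntOrder (toMeas (PhiM r m x)) (toMeas (PhiM r n x)) := by
  rcases eq_or_ne m 0 with rfl | hm0
  · simpa [PhiM, toMeas] using intOrder_zero_left (toMeas (PhiM r n x))
  · exact intOrder_shift h <| gammaStar_le_gammaStar (fun k hk => (hr k hk).1) hrmono hm0 hn
      (atomsLE_of_intOrder h) hx

/-- Monotonicity of the processor-sharing one-step map `Φ^r(·, x)` for the partial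
integral order. -/
theorem stmt13 (r : ℕ → ℝ) (hr : ∀ n, 1 ≤ n → 0 < r n ∧ r n ≤ 1)
    (hrmono : ∀ p q, 1 ≤ p → p ≤ q → r q ≤ r p)
    (x : ℝ) (hx : 0 ≤ x)
    (m n : Multiset ℝ) (hm : ∀ a ∈ m, (0:ℝ) ≤ a) (hn : ∀ a ∈ n, (0:ℝ) ≤ a)
    (h : IntOrder (toMeas m) (toMeas n)) :
    IntOrder (toMeas (PhiM r m x)) (toMeas (PhiM r n x)) :=
  stmt13_general r hr hrmono x hx m n hn h
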